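/- arXiv:2106.12262 — 3 statements merged into one kernel-verified Lean document; each statement's English description precedes it below -/
import Mathlib

section
/- Fix real numbers rho in (0,1) and alpha >= 0, and set c := 1 + alpha^2 + rho^2. Define g : (-1,1) -> R by g(lambda) = -(c - rho lambda) / ( 2 (1 - lambda^2) ). Then g attains its maximum over (-1,1) at the unique point lambda*(alpha, rho) := ( alpha^2 + rho^2 + 1 - sqrt( (alpha^2 + rho^2 + rho + 1)(alpha^2 + rho^2 - rho + 1) ) ) / rho, and moreover lambda*(alpha, rho) lies in the open interval (0, 1). -/
/-!
Write `c = 1 + α² + ρ²` and `s = √(c² - ρ²)`, so that `(c - s)(c + s) = ρ²` and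
`λ* = (c - s) / ρ = ρ / (c + s)`. Then `g(λ*) = -(c + s) / 4`, and completing the square gives
`g(λ*) - g(λ) = (c + s)(λ - λ*)² / (4(1 - λ²))`: the numerator `(c + s)λ² - 2ρλ + (c - s)` is a
quadratic with vanishing discriminant. This is positive for `λ ∈ (-1, 1)`, `λ ≠ λ*`.
-/

open Real

/-- The function `g` of the paper, with `c = 1 + α² + ρ²`. -/
noncomputable def varCriterion (c ρ l : ℝ) : ℝ := -(c - ρ * l) / (2 * (1 - l ^ 2))

noncomputable def optimalLambda (c ρ : ℝ) : ℝ := (c - √(c ^ 2 - ρ ^ 2)) / ρ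

section
variable {c ρ : ℝ}

lemma sq_sqrt_sq_sub_sq (hρc : |ρ| < c) : √(c ^ 2 - ρ ^ 2) ^ 2 = c ^ 2 - ρ ^ 2 :=
  sq_sqrt (by nlinarith [sq_abs ρ, abs_nonneg ρ])

lemma sqrt_sq_sub_sq_pos (hρc : |ρ| < c) : 0 < √(c ^ 2 - ρ ^ 2) :=
  sqrt_pos.2 (by nlinarith [sq_abs ρ, abs_nonneg ρ])

lemma add_sqrt_sq_sub_sq_pos (hρc : |ρ| < c) : 0 < c + √(c ^ 2 - ρ ^ 2) := by
  linarith [abs_nonneg ρ, sqrt_sq_sub_sq_pos hρc]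

lemma optimalLambda_eq_div (hρ : ρ ≠ 0) (hρc : |ρ| < c) :
    optimalLambda c ρ = ρ / (c + √(c ^ 2 - ρ ^ 2)) := by
  rw [optimalLambda, div_eq_div_iff hρ (add_sqrt_sq_sub_sq_pos hρc).ne']
  linear_combination -sq_sqrt_sq_sub_sq hρc

lemma abs_optimalLambda_lt_one (hρ : ρ ≠ 0) (hρc : |ρ| < c) : |optimalLambda c ρ| < 1 := by
  have hs := sqrt_sq_sub_sq_pos hρc
  have hpos := add_sqrt_sq_sub_sq_pos hρc
  rw [optimalLambda_eq_div hρ hρc, abs_div, abs_of_pos hpos, div_lt_one hpos]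
  linarith

lemma optimalLambda_mem_Ioo (hρ : 0 < ρ) (hρc : ρ < c) : optimalLambda c ρ ∈ Set.Ioo 0 1 := by
  have hρc' : |ρ| < c := by rwa [abs_of_pos hρ]
  have hpos : 0 < optimalLambda c ρ := by
    rw [optimalLambda_eq_div hρ.ne' hρc']
    exact div_pos hρ (add_sqrt_sq_sub_sq_pos hρc')
  exact ⟨hpos, (abs_lt.1 (abs_optimalLambda_lt_one hρ.ne' hρc')).2⟩

lemma varCriterion_optimalLambda (hρ : ρ ≠ 0) (hρc : |ρ| < c) :
    varCriterion c ρ (optimalLambda c ρ) = -(c + √(c ^ 2 - ρ ^ 2)) / 4 := by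
  set s := √(c ^ 2 - ρ ^ 2)
  set L := optimalLambda c ρ
  have hL₁ : ρ * L = c - s := mul_div_cancel₀ _ hρ
  have hL₂ : (c + s) * L = ρ := by
    rw [show L = ρ / (c + s) from optimalLambda_eq_div hρ hρc]
    exact mul_div_cancel₀ _ (add_sqrt_sq_sub_sq_pos hρc).ne'
  have hL : 1 - L ^ 2 ≠ 0 := by
    have := abs_optimalLambda_lt_one hρ hρc
    nlinarith [sq_abs L, abs_nonneg L]
  rw [varCriterion, div_eq_div_iff (mul_ne_zero two_ne_zero hL) four_ne_zero]
  linear_combination (-2 * L) * hL₂ + 2 * hL₁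

lemma varCriterion_optimalLambda_sub (hρ : ρ ≠ 0) (hρc : |ρ| < c) {l : ℝ} (hl : 1 - l ^ 2 ≠ 0) :
    varCriterion c ρ (optimalLambda c ρ) - varCriterion c ρ l =
      (c + √(c ^ 2 - ρ ^ 2)) * (l - optimalLambda c ρ) ^ 2 / (4 * (1 - l ^ 2)) := by
  have hpos := add_sqrt_sq_sub_sq_pos hρc
  rw [varCriterion_optimalLambda hρ hρc, optimalLambda_eq_div hρ hρc, varCriterion]
  field_simp
  linear_combination (-2) * sq_sqrt_sq_sub_sq hρc

lemma varCriterion_lt_optimalLambda (hρ : ρ ≠ 0) (hρc : |ρ| < c) {l : ℝ}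
    (hl : l ∈ Set.Ioo (-1) 1) (hne : l ≠ optimalLambda c ρ) :
    varCriterion c ρ l < varCriterion c ρ (optimalLambda c ρ) := by
  have h1l : 0 < 1 - l ^ 2 := by nlinarith [hl.1, hl.2]
  rw [← sub_pos, varCriterion_optimalLambda_sub hρ hρc h1l.ne']
  have hsq : 0 < (l - optimalLambda c ρ) ^ 2 := sq_pos_of_ne_zero (sub_ne_zero.2 hne)
  have hpos := add_sqrt_sq_sub_sq_pos hρc
  positivity

end

theorem profiled_variational_parameter_unique_max_general
    (ρ α : ℝ) (hρ : ρ ∈ Set.Ioo (0 : ℝ) 1) :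
    (α ^ 2 + ρ ^ 2 + 1 -
        Real.sqrt ((α ^ 2 + ρ ^ 2 + ρ + 1) * (α ^ 2 + ρ ^ 2 - ρ + 1))) / ρ
      ∈ Set.Ioo (0 : ℝ) 1 ∧
    ∀ l ∈ Set.Ioo (-1 : ℝ) 1,
      l ≠ (α ^ 2 + ρ ^ 2 + 1 -
            Real.sqrt ((α ^ 2 + ρ ^ 2 + ρ + 1) * (α ^ 2 + ρ ^ 2 - ρ + 1))) / ρ →
      -((1 + α ^ 2 + ρ ^ 2) - ρ * l) / (2 * (1 - l ^ 2)) <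
        -((1 + α ^ 2 + ρ ^ 2) -
            ρ * ((α ^ 2 + ρ ^ 2 + 1 -
              Real.sqrt ((α ^ 2 + ρ ^ 2 + ρ + 1) * (α ^ 2 + ρ ^ 2 - ρ + 1))) / ρ)) /
          (2 * (1 - ((α ^ 2 + ρ ^ 2 + 1 -
              Real.sqrt ((α ^ 2 + ρ ^ 2 + ρ + 1) * (α ^ 2 + ρ ^ 2 - ρ + 1))) / ρ) ^ 2)) := by
  have hρc : ρ < 1 + α ^ 2 + ρ ^ 2 := by nlinarith [sq_nonneg α, sq_nonneg (ρ - 1)]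
  have hρc' : |ρ| < 1 + α ^ 2 + ρ ^ 2 := by rwa [abs_of_pos hρ.1]
  have hopt : (α ^ 2 + ρ ^ 2 + 1 -
      √((α ^ 2 + ρ ^ 2 + ρ + 1) * (α ^ 2 + ρ ^ 2 - ρ + 1))) / ρ =
      optimalLambda (1 + α ^ 2 + ρ ^ 2) ρ := by
    rw [optimalLambda]
    ring_nf
  rw [hopt]
  exact ⟨optimalLambda_mem_Ioo hρ.1 hρc,
    fun l hl hne => varCriterion_lt_optimalLambda hρ.1.ne' hρc' hl hne⟩

/-- The λ-dependent part of the limit variational criterion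
`g(λ) = -(1 + α² + ρ² - ρλ) / (2(1 - λ²))` attains its maximum over `(-1, 1)`
at the unique point
`λ*(α,ρ) = (α² + ρ² + 1 - √((α² + ρ² + ρ + 1)(α² + ρ² - ρ + 1)))/ρ`,
which moreover lies in `(0, 1)`. -/
theorem profiled_variational_parameter_unique_max
    (ρ α : ℝ) (hρ : ρ ∈ Set.Ioo (0 : ℝ) 1) (hα : 0 ≤ α) :
    (α ^ 2 + ρ ^ 2 + 1 -
        Real.sqrt ((α ^ 2 + ρ ^ 2 + ρ + 1) * (α ^ 2 + ρ ^ 2 - ρ + 1))) / ρ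
      ∈ Set.Ioo (0 : ℝ) 1 ∧
    ∀ l ∈ Set.Ioo (-1 : ℝ) 1,
      l ≠ (α ^ 2 + ρ ^ 2 + 1 -
            Real.sqrt ((α ^ 2 + ρ ^ 2 + ρ + 1) * (α ^ 2 + ρ ^ 2 - ρ + 1))) / ρ →
      -((1 + α ^ 2 + ρ ^ 2) - ρ * l) / (2 * (1 - l ^ 2)) <
        -((1 + α ^ 2 + ρ ^ 2) -
            ρ * ((α ^ 2 + ρ ^ 2 + 1 -
              Real.sqrt ((α ^ 2 + ρ ^ 2 + ρ + 1) * (α ^ 2 + ρ ^ 2 - ρ + 1))) / ρ)) /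
          (2 * (1 - ((α ^ 2 + ρ ^ 2 + 1 -
              Real.sqrt ((α ^ 2 + ρ ^ 2 + ρ + 1) * (α ^ 2 + ρ ^ 2 - ρ + 1))) / ρ) ^ 2)) :=
  profiled_variational_parameter_unique_max_general ρ α hρ
end

section
/- The function h : (0,1) -> R defined by h(rho) = (1/2) * sqrt( rho^4 + rho^2 + 1 ) / ( ( (1 + rho^2 - sqrt( rho^4 + rho^2 + 1 ))^2 / rho^2 ) - 1 ) is strictly decreasing on (0,1). -/
/-! Since `(1 + ρ²)² - ρ² = ρ⁴ + ρ² + 1`, the square root `s` satisfies `s² = a² - ρ²` with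
`a = 1 + ρ²`. Then `(a - s)² - ρ² = 2s(s - a)`, and rationalising collapses the objective to
`-(1 + ρ² + √(ρ⁴ + ρ² + 1)) / 4`, visibly decreasing for `ρ > 0`. -/

open Real Set

lemma half_mul_div_sq_sub_div_sq_sub_one {a b s : ℝ} (hb : b ≠ 0) (hs : s ≠ 0)
    (hsq : s ^ 2 = a ^ 2 - b ^ 2) :
    1 / 2 * s / ((a - s) ^ 2 / b ^ 2 - 1) = -(a + s) / 4 := by
  have hden : (a - s) ^ 2 / b ^ 2 - 1 = 2 * s * (s - a) / b ^ 2 := by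
    field_simp
    linear_combination -hsq
  have hsa : s - a ≠ 0 := by
    intro h
    have : b ^ 2 = 0 := by linear_combination (-(s + a)) * h + hsq
    exact hb (pow_eq_zero_iff two_ne_zero |>.mp this)
  rw [hden]
  field_simp
  linear_combination 4 * hsq

lemma strictMonoOn_one_add_sq_add_sqrt :
    StrictMonoOn (fun ρ : ℝ => 1 + ρ ^ 2 + √(ρ ^ 4 + ρ ^ 2 + 1)) (Ici 0) := by
  intro x hx y hy hxy
  have hsq : x ^ 2 < y ^ 2 := pow_left_strictMonoOn₀ two_ne_zero hx hy hxy
  have hsqrt : √(x ^ 4 + x ^ 2 + 1) < √(y ^ 4 + y ^ 2 + 1) :=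
    Real.sqrt_lt_sqrt (by positivity) (by nlinarith)
  dsimp only
  linarith

/-- The concentrated variational objective at `α = 0`,
`h(ρ) = (1/2) √(ρ⁴ + ρ² + 1) / ((1 + ρ² - √(ρ⁴ + ρ² + 1))²/ρ² - 1)`,
is strictly decreasing on `(0, 1)`. -/
theorem concentrated_objective_alpha_zero_strictAnti :
    StrictAntiOn
      (fun ρ : ℝ =>
        (1 / 2) * Real.sqrt (ρ ^ 4 + ρ ^ 2 + 1) /
          ((1 + ρ ^ 2 - Real.sqrt (ρ ^ 4 + ρ ^ 2 + 1)) ^ 2 / ρ ^ 2 - 1))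
      (Set.Ioo (0 : ℝ) 1) := by
  have hanti : StrictAntiOn (fun ρ : ℝ => -(1 + ρ ^ 2 + √(ρ ^ 4 + ρ ^ 2 + 1)) / 4) (Ioo 0 1) :=
    fun x hx y hy hxy => div_lt_div_of_pos_right
      (neg_lt_neg (strictMonoOn_one_add_sq_add_sqrt hx.1.le hy.1.le hxy)) four_pos
  refine hanti.congr fun ρ hρ => ?_
  have hpos : 0 < ρ ^ 4 + ρ ^ 2 + 1 := by positivity
  exact (half_mul_div_sq_sub_div_sq_sub_one hρ.1.ne' (Real.sqrt_pos.mpr hpos).ne'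
    (by rw [Real.sq_sqrt hpos.le]; ring)).symm
end

section
/- For every real number rho in (0,1), 0 < ( (1 + rho^2 - sqrt( rho^4 + rho^2 + 1 )) / rho )^2 < (2 - sqrt(3))^2. Equivalently, the quantity ( (1 + rho^2 - sqrt( rho^4 + rho^2 + 1 ))^2 / rho^2 ) - 1 is strictly greater than -1 and strictly less than (2 - sqrt(3))^2 - 1 for all rho in (0,1). -/
/-! With `c = 2 - √3` one has `c² + 1 = 4c`, which gives the identity
`ρ⁴ + ρ² + 1 - (1 + ρ² - cρ)² = 2cρ(1 - ρ)²`. Hence `1 + ρ² - cρ < √(ρ⁴ + ρ² + 1) < 1 + ρ²`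
for `0 < ρ ≠ 1`, i.e. `0 < profiledParameter ρ < c = profiledParameter 1`, and squaring
preserves these bounds. -/

open Real

noncomputable def profiledParameter (ρ : ℝ) : ℝ :=
  (1 + ρ ^ 2 - √(ρ ^ 4 + ρ ^ 2 + 1)) / ρ

lemma sqrt_three_lt_two : √3 < 2 := by
  rw [sqrt_lt' two_pos]
  norm_num

lemma sq_two_sub_sqrt_three_add_one : (2 - √3) ^ 2 + 1 = 4 * (2 - √3) := by
  linear_combination sq_sqrt (zero_le_three : (0 : ℝ) ≤ 3)

lemma sqrt_quartic_lt_one_add_sq {ρ : ℝ} (hρ : ρ ≠ 0) : √(ρ ^ 4 + ρ ^ 2 + 1) < 1 + ρ ^ 2 := by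
  rw [sqrt_lt' (by positivity)]
  nlinarith [pow_pos (sq_pos_of_ne_zero hρ) 1]

lemma quartic_sub_sq_eq (ρ : ℝ) :
    ρ ^ 4 + ρ ^ 2 + 1 - (1 + ρ ^ 2 - (2 - √3) * ρ) ^ 2 = 2 * (2 - √3) * ρ * (1 - ρ) ^ 2 := by
  linear_combination -ρ ^ 2 * sq_two_sub_sqrt_three_add_one

lemma one_add_sq_sub_lt_sqrt_quartic {ρ : ℝ} (hρ0 : 0 < ρ) (hρ1 : ρ ≠ 1) :
    1 + ρ ^ 2 - (2 - √3) * ρ < √(ρ ^ 4 + ρ ^ 2 + 1) := by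
  have hgap : 0 < 2 * (2 - √3) * ρ * (1 - ρ) ^ 2 := by
    have := sub_pos.mpr sqrt_three_lt_two
    have := sq_pos_of_ne_zero (sub_ne_zero.mpr hρ1.symm)
    positivity
  apply lt_sqrt_of_sq_lt
  linarith [quartic_sub_sq_eq ρ]

lemma profiledParameter_pos {ρ : ℝ} (hρ : 0 < ρ) : 0 < profiledParameter ρ :=
  div_pos (sub_pos.mpr (sqrt_quartic_lt_one_add_sq hρ.ne')) hρ

lemma profiledParameter_lt_two_sub_sqrt_three {ρ : ℝ} (hρ0 : 0 < ρ) (hρ1 : ρ ≠ 1) :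
    profiledParameter ρ < 2 - √3 := by
  rw [profiledParameter, div_lt_iff₀ hρ0]
  linarith [one_add_sq_sub_lt_sqrt_quartic hρ0 hρ1]

/-- Bounds on the squared profiled variational parameter at `α = 0`: for every
`ρ ∈ (0,1)`, `0 < ((1 + ρ² - √(ρ⁴ + ρ² + 1))/ρ)² < (2 - √3)²`; equivalently,
`((1 + ρ² - √(ρ⁴ + ρ² + 1))²/ρ²) - 1` lies strictly between `-1` and
`(2 - √3)² - 1`. -/
theorem profiled_parameter_squared_bounds :
    ∀ ρ ∈ Set.Ioo (0 : ℝ) 1,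
      (0 < ((1 + ρ ^ 2 - Real.sqrt (ρ ^ 4 + ρ ^ 2 + 1)) / ρ) ^ 2 ∧
        ((1 + ρ ^ 2 - Real.sqrt (ρ ^ 4 + ρ ^ 2 + 1)) / ρ) ^ 2 <
          (2 - Real.sqrt 3) ^ 2) ∧
      (-1 < (1 + ρ ^ 2 - Real.sqrt (ρ ^ 4 + ρ ^ 2 + 1)) ^ 2 / ρ ^ 2 - 1 ∧
        (1 + ρ ^ 2 - Real.sqrt (ρ ^ 4 + ρ ^ 2 + 1)) ^ 2 / ρ ^ 2 - 1 <
          (2 - Real.sqrt 3) ^ 2 - 1) := by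
  rintro ρ ⟨hρ0, hρ1⟩
  have hpos := profiledParameter_pos hρ0
  have hsq_pos : 0 < profiledParameter ρ ^ 2 := by positivity
  have hsq_lt : profiledParameter ρ ^ 2 < (2 - √3) ^ 2 :=
    pow_lt_pow_left₀ (profiledParameter_lt_two_sub_sqrt_three hρ0 hρ1.ne) hpos.le two_ne_zero
  rw [← div_pow, ← profiledParameter]
  exact ⟨⟨hsq_pos, hsq_lt⟩, by linarith, by linarith⟩
end
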